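/- If (G, D, {D₁,…,Dₙ}) is a minimal decomposition of a closed triangulated surface T, then every triangle of G intersects the boundary of G. -/

import Mathlib

/-!
If a triangle `t` of `G` had no vertex on `∂G`, it could be moved from `G` into the list of
discs. Every vertex `w` of `t` is interior, so the triangles around `w` form a cycle under edge
adjacency, and removing `t` leaves a path; hence `G \ {t}` is still a surface, whose global
connectivity is restored by rerouting around `t` through these links. The single triangle `{t}`
is a disc meeting `G \ {t}` in the circle `∂t`, and it misses the other pieces, which meet `G`
only along `∂G`. This decomposition has a smaller `G`, contradicting minimality.
-/

namespace Tri

/-- A (pure 2-dimensional) simplicial complex, given by its set of triangles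
(each triangle is a 3-element finset of vertex labels). -/
abbrev Complex := Finset (Finset ℕ)

/-- The vertices of a complex. -/
def vertices (K : Complex) : Finset ℕ := K.biUnion id

/-- The edges of a complex: 2-element subsets of triangles. -/
def edges (K : Complex) : Finset (Finset ℕ) := K.biUnion fun t => t.powersetCard 2

/-- The valence of a vertex: the number of triangles containing it. -/
def valence (K : Complex) (v : ℕ) : ℕ := (K.filter (fun t => v ∈ t)).card

/-- The maximal vertex-valence of a complex. -/
def mv (K : Complex) : ℕ := (vertices K).sup (valence K)

/-- Euler characteristic V - E + T. -/
def eulerChar (K : Complex) : ℤ :=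
  ((vertices K).card : ℤ) - (edges K).card + K.card

/-- Two triangles of `K` both containing `v` and sharing an edge. -/
def adjAt (K : Complex) (v : ℕ) (t₁ t₂ : Finset ℕ) : Prop :=
  t₁ ∈ K ∧ t₂ ∈ K ∧ v ∈ t₁ ∧ v ∈ t₂ ∧ (t₁ ∩ t₂).card = 2

/-- Two triangles of `K` sharing an edge. -/
def adj (K : Complex) (t₁ t₂ : Finset ℕ) : Prop :=
  t₁ ∈ K ∧ t₂ ∈ K ∧ (t₁ ∩ t₂).card = 2

/-- A triangulation of a connected compact surface, possibly with boundary: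
every triangle has 3 vertices, every edge lies in at most two triangles,
the triangles around every vertex are connected via edges through that vertex
(so every vertex link is a path or a circle), and the complex is connected. -/
structure IsSurface (K : Complex) : Prop where
  nonempty : K.Nonempty
  card3 : ∀ t ∈ K, t.card = 3
  edge_le : ∀ e ∈ edges K, (K.filter (fun t => e ⊆ t)).card ≤ 2
  link_conn : ∀ v, ∀ t₁ ∈ K, ∀ t₂ ∈ K, v ∈ t₁ → v ∈ t₂ →
    Relation.ReflTransGen (adjAt K v) t₁ t₂
  conn : ∀ t₁ ∈ K, ∀ t₂ ∈ K, Relation.ReflTransGen (adj K) t₁ t₂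

/-- A triangulation of a closed (connected compact) surface: every edge lies
in exactly two triangles. -/
def IsClosedSurface (K : Complex) : Prop :=
  IsSurface K ∧ ∀ e ∈ edges K, (K.filter (fun t => e ⊆ t)).card = 2

/-- Boundary edges: edges lying in exactly one triangle. -/
def bdryEdges (K : Complex) : Finset (Finset ℕ) :=
  (edges K).filter (fun e => (K.filter (fun t => e ⊆ t)).card = 1)

/-- Boundary vertices. -/
def bdryVertices (K : Complex) : Finset ℕ := (bdryEdges K).biUnion id

/-- Interior vertices. -/
def intVertices (K : Complex) : Finset ℕ := vertices K \ bdryVertices K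

/-- A triangulated disc: a connected compact surface with nonempty boundary and
Euler characteristic 1. -/
def IsDisc (K : Complex) : Prop :=
  IsSurface K ∧ eulerChar K = 1 ∧ (bdryEdges K).Nonempty

/-- Two edges sharing a vertex. -/
def edgeAdj (E : Complex) (e₁ e₂ : Finset ℕ) : Prop :=
  e₁ ∈ E ∧ e₂ ∈ E ∧ (e₁ ∩ e₂).Nonempty

/-- A set of edges forming a triangulated circle. -/
def IsCircle (E : Complex) : Prop :=
  E.Nonempty ∧ (∀ e ∈ E, e.card = 2) ∧
  (∀ v ∈ E.biUnion id, (E.filter (fun e => v ∈ e)).card = 2) ∧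
  ∀ e₁ ∈ E, ∀ e₂ ∈ E, Relation.ReflTransGen (edgeAdj E) e₁ e₂

/-- Simplicial isomorphism (re-labeling). -/
def Iso (K₁ K₂ : Complex) : Prop :=
  ∃ f : ℕ → ℕ, Set.InjOn f (vertices K₁) ∧ K₁.image (Finset.image f) = K₂

/-- The boundary of the tetrahedron. -/
def tetra : Complex := {{1,2,3},{1,2,4},{1,3,4},{2,3,4}}

/-- The boundary of the octahedron. -/
def octa : Complex := {{1,2,3},{1,2,4},{1,3,5},{1,4,5},{2,3,6},{2,4,6},{3,5,6},{4,5,6}}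

/-- The vertices of the link of a vertex. -/
def linkV (K : Complex) (v : ℕ) : Finset ℕ :=
  ((K.filter (fun t => v ∈ t)).biUnion id).erase v

/-- The result of the inverse T-move removing the vertex `v`. -/
def invT (K : Complex) (v : ℕ) : Complex :=
  insert (linkV K v) (K.filter (fun t => v ∉ t))

/-- `K'` is obtained from `K` by an inverse T-move: a 3-valent vertex whose
link does not bound a triangle is removed. -/
def InvTStep (K K' : Complex) : Prop :=
  ∃ v, valence K v = 3 ∧ linkV K v ∉ K ∧ K' = invT K v

/-- A root: a closed triangulated surface admitting no inverse T-move. -/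
def IsRoot (K : Complex) : Prop := IsClosedSurface K ∧ ∀ K', ¬ InvTStep K K'

/-- `R` is a root of `K`: obtained from `K` by inverse T-moves, with no
further inverse T-move applicable. -/
def IsRootOf (R K : Complex) : Prop :=
  Relation.ReflTransGen InvTStep K R ∧ ∀ R', ¬ InvTStep R R'

/-- The directed edges of an ordered triangle. -/
def dedges (p : ℕ × ℕ × ℕ) : Finset (ℕ × ℕ) := {(p.1, p.2.1), (p.2.1, p.2.2), (p.2.2, p.1)}

/-- Orientability: a coherent choice of cyclic orders on the triangles,
i.e. no directed edge is shared by two distinct triangles. -/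
def Orientable (K : Complex) : Prop :=
  ∃ o : Finset ℕ → ℕ × ℕ × ℕ,
    (∀ t ∈ K, ({(o t).1, (o t).2.1, (o t).2.2} : Finset ℕ) = t) ∧
    ∀ t₁ ∈ K, ∀ t₂ ∈ K, t₁ ≠ t₂ → ∀ p ∈ dedges (o t₁), p ∉ dedges (o t₂)

/-- Two closed triangulated surfaces triangulate the same surface iff they
have the same Euler characteristic and the same orientability. -/
def SameSurface (K₁ K₂ : Complex) : Prop :=
  eulerChar K₁ = eulerChar K₂ ∧ (Orientable K₁ ↔ Orientable K₂)

/-- The intersection of two subcomplexes is a triangulated circle or empty. -/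
def CircleInter (A B : Complex) : Prop :=
  (IsCircle (edges A ∩ edges B) ∨ edges A ∩ edges B = ∅) ∧
  vertices A ∩ vertices B = (edges A ∩ edges B).biUnion id

/-- A decomposition `(G, D, Ds)` of a closed triangulated surface `K`. -/
structure IsDecomp (K G D : Complex) (Ds : Finset Complex) : Prop where
  closed : IsClosedSurface K
  subG : G ⊆ K
  subD : D ⊆ K
  subDs : ∀ Di ∈ Ds, Di ⊆ K
  surfG : IsSurface G
  discD : IsDisc D
  discDs : ∀ Di ∈ Ds, IsDisc Di
  maxv : ∃ v ∈ intVertices D, valence K v = mv K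
  cover : G ∪ D ∪ Ds.sup id = K
  disjGD : Disjoint G D
  disjGDs : ∀ Di ∈ Ds, Disjoint G Di
  disjDDs : ∀ Di ∈ Ds, Disjoint D Di
  disjDsDs : ∀ Di ∈ Ds, ∀ Dj ∈ Ds, Di ≠ Dj → Disjoint Di Dj
  interGD : CircleInter G D
  interGDs : ∀ Di ∈ Ds, CircleInter G Di
  interDDs : ∀ Di ∈ Ds, CircleInter D Di
  interDsDs : ∀ Di ∈ Ds, ∀ Dj ∈ Ds, Di ≠ Dj → CircleInter Di Dj

/-- A minimal decomposition: the genus-surface has the fewest triangles. -/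
def IsMinDecomp (K G D : Complex) (Ds : Finset Complex) : Prop :=
  IsDecomp K G D Ds ∧ ∀ G' D' Ds', IsDecomp K G' D' Ds' → G.card ≤ G'.card

open Finset Relation

section Graph

variable {α : Type*}

def restrictRel (S : Finset α) (r : α → α → Prop) (x y : α) : Prop :=
  x ∈ S ∧ y ∈ S ∧ r x y

variable {r : α → α → Prop}

lemma even_sum_card_filter [DecidableRel r] (C : Finset α) (hr : ∀ x y, r x y → r y x)
    (hirr : ∀ x ∈ C, ¬ r x x) : Even (∑ x ∈ C, #{y ∈ C | r x y}) := by
  let H : SimpleGraph C :=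
    { Adj x y := r x y
      symm := ⟨fun _ _ => hr _ _⟩
      loopless := ⟨fun x => hirr x x.2⟩ }
  have hdeg : ∀ x : C, H.degree x = #{y ∈ C | r x y} := by
    intro x
    rw [← SimpleGraph.card_neighborFinset_eq_degree, SimpleGraph.neighborFinset_eq_filter,
      card_filter, card_filter, ← sum_coe_sort C]
  rw [← sum_coe_sort C, sum_congr rfl (fun x _ => (hdeg x).symm),
    H.sum_degrees_eq_twice_card_edges]
  exact even_two_mul _

lemma reflTransGen_restrictRel_erase {S : Finset α} {t : α} [DecidableEq α]
    (hS : ∀ x ∈ S, ∀ y ∈ S, ReflTransGen (restrictRel S r) x y)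
    (hnbr : ∀ a ∈ S.erase t, ∀ b ∈ S.erase t, r a t → r t b →
      ReflTransGen (restrictRel (S.erase t) r) a b) :
    ∀ x ∈ S.erase t, ∀ y ∈ S.erase t, ReflTransGen (restrictRel (S.erase t) r) x y := by
  intro x hx y hy
  -- each passage `a → t → b` of a path in `S` is replaced by a path from `a` to `b` avoiding `t`
  suffices key : ∀ z, ReflTransGen (restrictRel S r) x z →
      (z ≠ t → ReflTransGen (restrictRel (S.erase t) r) x z) ∧
      (z = t → ∃ a ∈ S.erase t, r a t ∧ ReflTransGen (restrictRel (S.erase t) r) x a) from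
    (key y (hS x (mem_of_mem_erase hx) y (mem_of_mem_erase hy))).1 (ne_of_mem_erase hy)
  intro z hz
  induction hz with
  | refl => exact ⟨fun _ => .refl, fun h => absurd h (ne_of_mem_erase hx)⟩
  | @tail u w _ huw ih =>
    obtain ⟨hu, hw, hr⟩ := huw
    by_cases hut : u = t <;> by_cases hwt : w = t
    · subst hut hwt
      exact ⟨fun h => absurd rfl h, fun _ => ih.2 rfl⟩
    · subst hut
      obtain ⟨a, ha, hat, hxa⟩ := ih.2 rfl
      exact ⟨fun _ => hxa.trans (hnbr a ha w (mem_erase.2 ⟨hwt, hw⟩) hat hr), (absurd · hwt)⟩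
    · subst hwt
      exact ⟨fun h => absurd rfl h, fun _ => ⟨u, mem_erase.2 ⟨hut, hu⟩, hr, ih.1 hut⟩⟩
    · exact ⟨fun _ => (ih.1 hut).tail ⟨mem_erase.2 ⟨hut, hu⟩, mem_erase.2 ⟨hwt, hw⟩, hr⟩,
        (absurd · hwt)⟩

/-- Handshake in the component `C` of `a` in `S.erase t`: its only vertices of odd degree are the
neighbours of `t`, so `C` contains an even number of them, hence `b` along with `a`. -/
lemma reflTransGen_restrictRel_erase_of_card_eq_two [DecidableEq α] [DecidableRel r]
    {S : Finset α} {t : α} (hr : ∀ x y, r x y → r y x) (hirr : ∀ x ∈ S, ¬ r x x)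
    (h2 : ∀ x ∈ S, #{y ∈ S | r x y} = 2) (ht : t ∈ S) :
    ∀ a ∈ S.erase t, ∀ b ∈ S.erase t, r a t → r t b →
      ReflTransGen (restrictRel (S.erase t) r) a b := by
  classical
  intro a ha b hb hat htb
  set C := {x ∈ S.erase t | ReflTransGen (restrictRel (S.erase t) r) a x}
  have hclosed : ∀ x ∈ C, ∀ y ∈ S.erase t, r x y → y ∈ C := fun x hx y hy hxy =>
    mem_filter.2 ⟨hy, (mem_filter.1 hx).2.tail ⟨(mem_filter.1 hx).1, hy, hxy⟩⟩
  have hdeg : ∀ x ∈ C, #{y ∈ C | r x y} + (if r x t then 1 else 0) = 2 := by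
    intro x hx
    have hxS : x ∈ S := mem_of_mem_erase (mem_filter.1 hx).1
    have hnbr : {y ∈ C | r x y} = {y ∈ S | r x y}.erase t := by
      rw [← filter_erase]
      refine subset_antisymm (filter_subset_filter _ (filter_subset _ _)) fun y hy => ?_
      obtain ⟨hy, hxy⟩ := mem_filter.1 hy
      exact mem_filter.2 ⟨hclosed x hx y hy hxy, hxy⟩
    rw [hnbr, ← h2 x hxS]
    split_ifs with hxt
    · exact card_erase_add_one (mem_filter.2 ⟨ht, hxt⟩)
    · rw [erase_eq_of_notMem (fun h => hxt (mem_filter.1 h).2), add_zero]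
  have hsum : ∑ x ∈ C, #{y ∈ C | r x y} + #{x ∈ C | r x t} = 2 * #C := by
    rw [card_filter, ← sum_add_distrib, sum_congr rfl hdeg, sum_const, smul_eq_mul, mul_comm]
  have heven : Even #{x ∈ C | r x t} :=
    (Nat.even_add.1 (hsum ▸ even_two_mul _)).1
      (even_sum_card_filter C hr fun x hx => hirr x (mem_of_mem_erase (mem_filter.1 hx).1))
  have haC : a ∈ {x ∈ C | r x t} := mem_filter.2 ⟨mem_filter.2 ⟨ha, .refl⟩, hat⟩
  by_contra hab
  have hsub : {x ∈ C | r x t} ⊆ {y ∈ S | r t y}.erase b := by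
    intro x hx
    obtain ⟨hxC, hxt⟩ := mem_filter.1 hx
    refine mem_erase.2 ⟨fun hxb => hab (hxb ▸ (mem_filter.1 hxC).2), ?_⟩
    exact mem_filter.2 ⟨mem_of_mem_erase (mem_filter.1 hxC).1, hr _ _ hxt⟩
  have hle := card_le_card hsub
  rw [card_erase_of_mem (mem_filter.2 ⟨mem_of_mem_erase hb, htb⟩), h2 t ht] at hle
  have hpos := card_pos.2 ⟨a, haC⟩
  obtain ⟨k, hk⟩ := heven
  omega

end Graph

section Complexes

variable {K L : Complex}

lemma mem_edges {e : Finset ℕ} : e ∈ edges K ↔ ∃ t ∈ K, e ⊆ t ∧ #e = 2 := by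
  simp [edges]

lemma mem_vertices {v : ℕ} : v ∈ vertices K ↔ ∃ t ∈ K, v ∈ t := by
  simp [vertices]

lemma edges_mono (h : K ⊆ L) : edges K ⊆ edges L :=
  biUnion_subset_biUnion_of_subset_left _ h

lemma vertices_mono (h : K ⊆ L) : vertices K ⊆ vertices L :=
  biUnion_subset_biUnion_of_subset_left _ h

lemma mem_vertices_of_mem_edges {e : Finset ℕ} {v : ℕ} (he : e ∈ edges K) (hv : v ∈ e) :
    v ∈ vertices K :=
  have ⟨t, ht, het, _⟩ := mem_edges.1 he
  mem_vertices.2 ⟨t, ht, het hv⟩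

@[simp] lemma edges_singleton (t : Finset ℕ) : edges {t} = t.powersetCard 2 := singleton_biUnion

@[simp] lemma vertices_singleton (t : Finset ℕ) : vertices {t} = t := singleton_biUnion

end Complexes

section Triangle

variable {t : Finset ℕ}

lemma inter_nonempty_of_mem_powersetCard_two (ht : #t = 3) {e₁ e₂ : Finset ℕ}
    (h₁ : e₁ ∈ t.powersetCard 2) (h₂ : e₂ ∈ t.powersetCard 2) : (e₁ ∩ e₂).Nonempty := by
  rw [mem_powersetCard] at h₁ h₂
  exact inter_nonempty_of_card_lt_card_add_card h₁.1 h₂.1 (by omega)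

lemma card_filter_mem_powersetCard_two (ht : #t = 3) {v : ℕ} (hv : v ∈ t) :
    #{e ∈ t.powersetCard 2 | v ∈ e} = 2 := by
  simpa [ht] using card_filter_powersetCard_subset {v} t 2 (singleton_subset_iff.2 hv) (by simp)

lemma biUnion_powersetCard_two (ht : #t = 3) : (t.powersetCard 2).biUnion id = t :=
  powersetCard_biUnion two_ne_zero (by omega)

lemma isCircle_powersetCard_two (ht : #t = 3) : IsCircle (t.powersetCard 2) := by
  refine ⟨powersetCard_nonempty.2 (by omega), fun e he => (mem_powersetCard.1 he).2, ?_, ?_⟩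
  · intro v hv
    rw [biUnion_powersetCard_two ht] at hv
    exact card_filter_mem_powersetCard_two ht hv
  · intro e₁ h₁ e₂ h₂
    exact .single ⟨h₁, h₂, inter_nonempty_of_mem_powersetCard_two ht h₁ h₂⟩

lemma isDisc_singleton (ht : #t = 3) : IsDisc {t} := by
  refine ⟨⟨singleton_nonempty t, fun s hs => mem_singleton.1 hs ▸ ht, ?_, ?_, ?_⟩, ?_, ?_⟩
  · exact fun e _ => (card_filter_le _ _).trans (by simp)
  · intro v t₁ h₁ t₂ h₂ _ _
    rw [mem_singleton.1 h₁, mem_singleton.1 h₂]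
  · intro t₁ h₁ t₂ h₂
    rw [mem_singleton.1 h₁, mem_singleton.1 h₂]
  · simp [eulerChar, ht]
  · obtain ⟨e, he⟩ := powersetCard_nonempty.2 (show 2 ≤ #t by omega)
    refine ⟨e, mem_filter.2 ⟨by simpa using he, ?_⟩⟩
    rw [filter_singleton, if_pos (mem_powersetCard.1 he).1, card_singleton]

end Triangle

lemma adjAt_eq_restrictRel (K : Complex) (v : ℕ) :
    adjAt K v = restrictRel {s ∈ K | v ∈ s} (fun s u => #(s ∩ u) = 2) := by
  ext s u
  simp only [adjAt, restrictRel, mem_filter]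
  tauto

lemma adj_eq_restrictRel (K : Complex) : adj K = restrictRel K (fun s u => #(s ∩ u) = 2) := rfl

namespace IsSurface

variable {G : Complex} (hG : IsSurface G)
include hG

lemma card_inter_lt_three {s u : Finset ℕ} (hs : s ∈ G) (hu : u ∈ G) (hsu : s ≠ u) :
    #(s ∩ u) < 3 := by
  by_contra! h
  have hs' : s ∩ u = s := eq_of_subset_of_card_le inter_subset_left (hG.card3 s hs ▸ h)
  have hu' : s ∩ u = u := eq_of_subset_of_card_le inter_subset_right (hG.card3 u hu ▸ h)
  exact hsu (hs'.symm.trans hu')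

lemma card_inter_self_ne_two {s : Finset ℕ} (hs : s ∈ G) : #(s ∩ s) ≠ 2 := by
  rw [inter_self, hG.card3 s hs]
  decide

lemma card_filter_subset_eq_two {e : Finset ℕ} {v : ℕ} (he : e ∈ edges G) (hve : v ∈ e)
    (hv : v ∉ bdryVertices G) : #{s ∈ G | e ⊆ s} = 2 := by
  have hpos : 0 < #{s ∈ G | e ⊆ s} := by
    obtain ⟨s, hs, hes, _⟩ := mem_edges.1 he
    exact card_pos.2 ⟨s, mem_filter.2 ⟨hs, hes⟩⟩
  have hne : #{s ∈ G | e ⊆ s} ≠ 1 := fun h1 =>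
    hv (mem_biUnion.2 ⟨e, mem_filter.2 ⟨he, h1⟩, hve⟩)
  have := hG.edge_le e he
  omega

lemma card_filter_subset_erase_eq_one {s e : Finset ℕ} {v : ℕ} (hs : s ∈ G) (hes : e ⊆ s)
    (he : #e = 2) (hve : v ∈ e) (hv : v ∉ bdryVertices G) :
    #({u ∈ G | e ⊆ u}.erase s) = 1 := by
  rw [card_erase_of_mem (mem_filter.2 ⟨hs, hes⟩),
    hG.card_filter_subset_eq_two (mem_edges.2 ⟨s, hs, hes, he⟩) hve hv]

lemma exists_mem_erase_superset {s e : Finset ℕ} (hs : s ∈ G) (hes : e ⊆ s) (he : #e = 2)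
    (hbdry : Disjoint e (bdryVertices G)) : ∃ u ∈ G.erase s, e ⊆ u := by
  obtain ⟨v, hve⟩ := card_pos.1 (show 0 < #e by omega)
  obtain ⟨u, hu⟩ := card_pos.1 (by
    rw [hG.card_filter_subset_erase_eq_one hs hes he hve (disjoint_left.1 hbdry hve)]
    exact one_pos)
  obtain ⟨hus, huG, heu⟩ := by simpa only [mem_erase, mem_filter] using hu
  exact ⟨u, mem_erase.2 ⟨hus, huG⟩, heu⟩

/-- `u ↦ s ∩ u` maps the neighbours of `s` around `v` bijectively onto the two edges of `s`
through `v`, since each of these edges lies in exactly one other triangle. -/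
lemma card_link_neighbors_eq_two {s : Finset ℕ} {v : ℕ} (hs : s ∈ G) (hvs : v ∈ s)
    (hv : v ∉ bdryVertices G) : #{u ∈ {x ∈ G | v ∈ x} | #(s ∩ u) = 2} = 2 := by
  have hirr : ∀ u, #(s ∩ u) = 2 → u ≠ s := by
    rintro u h rfl
    exact hG.card_inter_self_ne_two hs h
  refine (card_bij (fun u _ => s ∩ u) ?_ ?_ ?_).trans
    (card_filter_mem_powersetCard_two (hG.card3 s hs) hvs)
  · intro u hu
    obtain ⟨⟨_, hvu⟩, hsu⟩ := by simpa only [mem_filter] using hu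
    exact mem_filter.2 ⟨mem_powersetCard.2 ⟨inter_subset_left, hsu⟩, mem_inter.2 ⟨hvs, hvu⟩⟩
  · intro u₁ hu₁ u₂ hu₂ (h : s ∩ u₁ = s ∩ u₂)
    obtain ⟨⟨hu₁G, hvu₁⟩, hsu₁⟩ := by simpa only [mem_filter] using hu₁
    obtain ⟨⟨hu₂G, -⟩, hsu₂⟩ := by simpa only [mem_filter] using hu₂
    have hone := hG.card_filter_subset_erase_eq_one hs inter_subset_left hsu₁
      (mem_inter.2 ⟨hvs, hvu₁⟩) hv
    refine card_le_one.1 hone.le _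
      (mem_erase.2 ⟨hirr u₁ hsu₁, mem_filter.2 ⟨hu₁G, inter_subset_right⟩⟩) _
      (mem_erase.2 ⟨hirr u₂ hsu₂, mem_filter.2 ⟨hu₂G, h ▸ inter_subset_right⟩⟩)
  · intro e he
    obtain ⟨⟨hes, he2⟩, hve⟩ := by simpa only [mem_filter, mem_powersetCard] using he
    obtain ⟨u, hu⟩ := card_pos.1 (by
      rw [hG.card_filter_subset_erase_eq_one hs hes he2 hve hv]
      exact one_pos)
    obtain ⟨hus, huG, heu⟩ := by simpa only [mem_erase, mem_filter] using hu
    have hinter : s ∩ u = e := (eq_of_subset_of_card_le (subset_inter hes heu)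
      (by have := hG.card_inter_lt_three hs huG (Ne.symm hus); omega)).symm
    exact ⟨u, mem_filter.2 ⟨mem_filter.2 ⟨huG, heu hve⟩, by rw [hinter, he2]⟩, hinter⟩

lemma link_reflTransGen_erase {t : Finset ℕ} (ht : t ∈ G) {w : ℕ} (hwt : w ∈ t)
    (hw : w ∉ bdryVertices G) :
    ∀ x ∈ G.erase t, ∀ y ∈ G.erase t, w ∈ x → w ∈ y →
      ReflTransGen (adjAt (G.erase t) w) x y := by
  intro x hx y hy hwx hwy
  have hmem : ∀ z ∈ G.erase t, w ∈ z → z ∈ {s ∈ G | w ∈ s}.erase t := fun z hz hwz =>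
    mem_erase.2 ⟨ne_of_mem_erase hz, mem_filter.2 ⟨mem_of_mem_erase hz, hwz⟩⟩
  rw [adjAt_eq_restrictRel, filter_erase]
  refine reflTransGen_restrictRel_erase ?_ ?_ x (hmem x hx hwx) y (hmem y hy hwy)
  · intro a ha b hb
    rw [mem_filter] at ha hb
    rw [← adjAt_eq_restrictRel]
    exact hG.link_conn w a ha.1 b hb.1 ha.2 hb.2
  · exact reflTransGen_restrictRel_erase_of_card_eq_two (fun s u h => inter_comm s u ▸ h)
      (fun s hs => hG.card_inter_self_ne_two (mem_filter.1 hs).1)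
      (fun s hs => hG.card_link_neighbors_eq_two (mem_filter.1 hs).1 (mem_filter.1 hs).2 hw)
      (mem_filter.2 ⟨ht, hwt⟩)

lemma erase {t : Finset ℕ} (ht : t ∈ G) (htb : Disjoint t (bdryVertices G)) :
    IsSurface (G.erase t) where
  nonempty := by
    obtain ⟨e, he⟩ := powersetCard_nonempty.2 (show 2 ≤ #t by rw [hG.card3 t ht]; omega)
    rw [mem_powersetCard] at he
    obtain ⟨u, hu, -⟩ :=
      hG.exists_mem_erase_superset ht he.1 he.2 (disjoint_of_subset_left he.1 htb)
    exact ⟨u, hu⟩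
  card3 s hs := hG.card3 s (mem_of_mem_erase hs)
  edge_le e he := (card_le_card (filter_subset_filter _ (erase_subset t G))).trans
    (hG.edge_le e (edges_mono (erase_subset t G) he))
  link_conn w := by
    by_cases hwt : w ∈ t
    · exact hG.link_reflTransGen_erase ht hwt (disjoint_left.1 htb hwt)
    · have hlink : adjAt (G.erase t) w = adjAt G w := by
        rw [adjAt_eq_restrictRel, adjAt_eq_restrictRel, filter_erase,
          erase_eq_of_notMem (by simp [hwt])]
      rw [hlink]
      exact fun x hx y hy => hG.link_conn w x (mem_of_mem_erase hx) y (mem_of_mem_erase hy)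
  conn := by
    rw [adj_eq_restrictRel]
    refine reflTransGen_restrictRel_erase hG.conn ?_
    -- two triangles sharing an edge with `t` share a vertex `w` of `t`; go around `w`
    intro a ha b hb hat hbt
    obtain ⟨w, hw⟩ := inter_nonempty_of_mem_powersetCard_two (hG.card3 t ht)
      (mem_powersetCard.2 ⟨inter_subset_right, hat⟩)
      (mem_powersetCard.2 ⟨inter_subset_left, hbt⟩)
    simp only [mem_inter] at hw
    exact ReflTransGen.mono (r := adjAt (G.erase t) w)
      (fun _ _ h => ⟨h.1, h.2.1, h.2.2.2.2⟩) _ _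
      (hG.link_reflTransGen_erase ht hw.2.1 (disjoint_left.1 htb hw.2.1) a ha b hb hw.1.1 hw.2.2)

end IsSurface

section CircleInter

variable {K G X : Complex}

lemma biUnion_edges_inter_subset (A B : Complex) :
    (edges A ∩ edges B).biUnion id ⊆ vertices A ∩ vertices B := by
  intro w hw
  obtain ⟨e, he, hwe⟩ := mem_biUnion.1 hw
  rw [mem_inter] at he ⊢
  exact ⟨mem_vertices_of_mem_edges he.1 hwe, mem_vertices_of_mem_edges he.2 hwe⟩

lemma CircleInter.symm (h : CircleInter G X) : CircleInter X G := by
  rwa [CircleInter, inter_comm (edges X), inter_comm (vertices X)]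

section DisjointPieces

variable (hK : IsClosedSurface K) (hGK : G ⊆ K) (hXK : X ⊆ K) (hGX : Disjoint G X)
include hK hGK hXK hGX

lemma edges_inter_subset_bdryEdges : edges G ∩ edges X ⊆ bdryEdges G := by
  intro e he
  obtain ⟨heG, heX⟩ := mem_inter.1 he
  obtain ⟨s, hs, hes, -⟩ := mem_edges.1 heG
  obtain ⟨d, hd, hed, -⟩ := mem_edges.1 heX
  have hsub : {u ∈ G | e ⊆ u} ⊆ {u ∈ K | e ⊆ u}.erase d := fun u hu =>
    mem_erase.2 ⟨fun hud => disjoint_left.1 hGX (mem_filter.1 hu).1 (hud ▸ hd),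
      filter_subset_filter _ hGK hu⟩
  have hle := card_le_card hsub
  rw [card_erase_of_mem (mem_filter.2 ⟨hXK hd, hed⟩), hK.2 e (edges_mono hGK heG)] at hle
  have hpos : 0 < #{u ∈ G | e ⊆ u} := card_pos.2 ⟨s, mem_filter.2 ⟨hs, hes⟩⟩
  exact mem_filter.2 ⟨heG, by omega⟩

lemma vertices_inter_subset_bdryVertices (hCI : CircleInter G X) :
    vertices G ∩ vertices X ⊆ bdryVertices G := by
  rw [hCI.2]
  exact biUnion_subset_biUnion_of_subset_left _ (edges_inter_subset_bdryEdges hK hGK hXK hGX)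

lemma CircleInter.erase (hCI : CircleInter G X) {t : Finset ℕ}
    (htb : Disjoint t (bdryVertices G)) : CircleInter (G.erase t) X := by
  have hE : edges (G.erase t) ∩ edges X = edges G ∩ edges X := by
    refine subset_antisymm (inter_subset_inter_right (edges_mono (erase_subset t G))) ?_
    intro e he
    obtain ⟨s, hs, hes, hec⟩ := mem_edges.1 (mem_inter.1 he).1
    obtain ⟨w, hwe⟩ := card_pos.1 (show 0 < #e by omega)
    have hwb : w ∈ bdryVertices G :=
      mem_biUnion.2 ⟨e, edges_inter_subset_bdryEdges hK hGK hXK hGX he, hwe⟩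
    have hst : s ≠ t := by
      rintro rfl
      exact disjoint_left.1 htb (hes hwe) hwb
    exact mem_inter.2 ⟨mem_edges.2 ⟨s, mem_erase.2 ⟨hst, hs⟩, hes, hec⟩, (mem_inter.1 he).2⟩
  refine ⟨by rw [hE]; exact hCI.1, subset_antisymm ?_ (biUnion_edges_inter_subset _ _)⟩
  rw [hE, ← hCI.2]
  exact inter_subset_inter_right (vertices_mono (erase_subset t G))

lemma CircleInter.singleton (hCI : CircleInter G X) {t : Finset ℕ} (ht : t ∈ G)
    (htb : Disjoint t (bdryVertices G)) : CircleInter X {t} := by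
  have hV : vertices X ∩ vertices {t} = ∅ := by
    refine eq_empty_of_forall_notMem fun w hw => ?_
    rw [vertices_singleton, mem_inter] at hw
    exact disjoint_left.1 htb hw.2 (vertices_inter_subset_bdryVertices hK hGK hXK hGX hCI
      (mem_inter.2 ⟨mem_vertices.2 ⟨t, ht, hw.2⟩, hw.1⟩))
  have hE : edges X ∩ edges {t} = ∅ := by
    refine eq_empty_of_forall_notMem fun e he => ?_
    obtain ⟨-, -, -, hec⟩ := mem_edges.1 (mem_inter.1 he).1
    obtain ⟨w, hwe⟩ := card_pos.1 (show 0 < #e by omega)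
    exact notMem_empty w (hV ▸ biUnion_edges_inter_subset X {t} (mem_biUnion.2 ⟨e, he, hwe⟩))
  exact ⟨Or.inr hE, by rw [hE, hV, biUnion_empty]⟩

end DisjointPieces

lemma IsSurface.circleInter_erase_singleton (hG : IsSurface G) {t : Finset ℕ} (ht : t ∈ G)
    (htb : Disjoint t (bdryVertices G)) : CircleInter (G.erase t) {t} := by
  have htc := hG.card3 t ht
  have hE : edges (G.erase t) ∩ edges {t} = t.powersetCard 2 := by
    refine subset_antisymm (edges_singleton t ▸ inter_subset_right) fun e he => ?_
    obtain ⟨het, hec⟩ := mem_powersetCard.1 he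
    obtain ⟨u, hu, heu⟩ :=
      hG.exists_mem_erase_superset ht het hec (disjoint_of_subset_left het htb)
    exact mem_inter.2 ⟨mem_edges.2 ⟨u, hu, heu, hec⟩, (edges_singleton t).symm ▸ he⟩
  refine ⟨Or.inl (hE ▸ isCircle_powersetCard_two htc), subset_antisymm ?_
    (biUnion_edges_inter_subset _ _)⟩
  rw [hE, biUnion_powersetCard_two htc, vertices_singleton]
  exact inter_subset_right

end CircleInter

lemma IsDecomp.erase_triangle {K G D : Complex} {Ds : Finset Complex} (hd : IsDecomp K G D Ds)
    {t : Finset ℕ} (ht : t ∈ G) (htb : Disjoint t (bdryVertices G)) :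
    IsDecomp K (G.erase t) D (insert {t} Ds) where
  closed := hd.closed
  subG := (erase_subset t G).trans hd.subG
  subD := hd.subD
  subDs := (forall_mem_insert _ _ _).2 ⟨singleton_subset_iff.2 (hd.subG ht), hd.subDs⟩
  surfG := hd.surfG.erase ht htb
  discD := hd.discD
  discDs := (forall_mem_insert _ _ _).2 ⟨isDisc_singleton (hd.surfG.card3 t ht), hd.discDs⟩
  maxv := hd.maxv
  cover := by
    rw [sup_insert, id, ← hd.cover]
    ext s
    by_cases hs : s = t <;> simp [hs, ht]
  disjGD := disjoint_of_subset_left (erase_subset t G) hd.disjGD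
  disjGDs := (forall_mem_insert _ _ _).2 ⟨disjoint_singleton_right.2 (notMem_erase t G),
    fun Di hDi => disjoint_of_subset_left (erase_subset t G) (hd.disjGDs Di hDi)⟩
  disjDDs := (forall_mem_insert _ _ _).2
    ⟨disjoint_singleton_right.2 (disjoint_left.1 hd.disjGD ht), hd.disjDDs⟩
  disjDsDs := by
    show (↑(insert {t} Ds) : Set Complex).Pairwise Disjoint
    rw [coe_insert]
    refine Set.Pairwise.insert hd.disjDsDs fun Di hDi _ => ?_
    have htDi : Disjoint {t} Di :=
      disjoint_singleton_left.2 (disjoint_left.1 (hd.disjGDs Di hDi) ht)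
    exact ⟨htDi, htDi.symm⟩
  interGD := hd.interGD.erase hd.closed hd.subG hd.subD hd.disjGD htb
  interGDs := (forall_mem_insert _ _ _).2 ⟨hd.surfG.circleInter_erase_singleton ht htb,
    fun Di hDi => (hd.interGDs Di hDi).erase hd.closed hd.subG (hd.subDs Di hDi)
      (hd.disjGDs Di hDi) htb⟩
  interDDs := (forall_mem_insert _ _ _).2
    ⟨hd.interGD.singleton hd.closed hd.subG hd.subD hd.disjGD ht htb, hd.interDDs⟩
  interDsDs := by
    show (↑(insert {t} Ds) : Set Complex).Pairwise CircleInter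
    rw [coe_insert]
    refine Set.Pairwise.insert hd.interDsDs fun Di hDi _ => ?_
    have hDit := (hd.interGDs Di hDi).singleton hd.closed hd.subG (hd.subDs Di hDi)
      (hd.disjGDs Di hDi) ht htb
    exact ⟨hDit.symm, hDit⟩

/-- in a minimal decomposition, every triangle of the
genus-surface intersects its boundary. -/
theorem triangle_meets_boundary (K G D : Complex) (Ds : Finset Complex)
    (h : IsMinDecomp K G D Ds) :
    ∀ t ∈ G, ∃ v ∈ t, v ∈ bdryVertices G := by
  intro t ht
  by_contra! htb
  have hle := h.2 _ _ _ (h.1.erase_triangle ht (disjoint_left.2 htb))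
  rw [card_erase_of_mem ht] at hle
  have hpos := card_pos.2 ⟨t, ht⟩
  omega

end Tri
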